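/- The family TL with the state operations is the free model of the parameterized theory of single-bit mutable state with local values (equations (5)–(7)) on generators A: for every model Y (a family Y : ℕ → Type with operations putY, getY, localY, closeY satisfying the listed equations including putY (n+1) i (closeY n z) = closeY n z) and every function f : A → Y 0, there exists a unique family of functions h : ∀ n, TL n → Y n such that h 0 (fun s => (a, s)) = f a for all a : A, and h is a homomorphism: h n (putT n i u) = putY n i (h n u); h n (getT n u v) = getY n (h n u) (h n v); h n (localT n i w) = localY n i (h (n+1) w); and h (n+1) (closeT n u) = closeY n (h n u). -/

import Mathlib

/-!
Every element of `TL A n` is a normal form built from the generators: at level `0`,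
`u = get (put b₀ (η a₀)) (put b₁ (η a₁))` with `(aᵢ, bᵢ) = u i` and `η a = fun s => (a, s)`;
at level `n + 1`, `u = get (close u₀) (close u₁)` with `uᵢ = u i`. A homomorphism is therefore
determined by its values on generators, and conversely interpreting these normal forms in `Y`
defines one. Checking that it preserves the operations only needs, besides the axioms, the two
derived laws `get x x = x` and `get (get a b) (get c d) = get a d`.
-/

namespace Stmt6

/-- `TL A 0 = Bool → A × Bool` and `TL A (n+1) = Bool → TL A n`. -/
def TL (A : Type) : ℕ → Type
  | 0 => Bool → A × Bool
  | n + 1 => Bool → TL A n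

/-- `get` branches on the stored bit. -/
def getT (A : Type) : ∀ n, TL A n → TL A n → TL A n
  | 0, f, g => fun s => if s then g s else f s
  | _ + 1, f, g => fun s => if s then g s else f s

/-- `put i` overwrites the state with `i`. -/
def putT (A : Type) : ∀ n, Bool → TL A n → TL A n
  | 0, i, f => fun _ => f i
  | _ + 1, i, f => fun _ => f i

/-- `local i` opens a scope with local state initialized to `i`. -/
def localT (A : Type) (n : ℕ) (i : Bool) (f : TL A (n + 1)) : TL A n := f i

/-- `close` closes a scope, discarding the local state. -/
def closeT (A : Type) (n : ℕ) (x : TL A n) : TL A (n + 1) := fun _ => x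

section GetPut

variable {X : Type*} {put : Bool → X → X} {get : X → X → X}

theorem get_eq_get_put (get_put : ∀ z, get (put false z) (put true z) = z)
    (put_get : ∀ i x₀ x₁, put i (get x₀ x₁) = put i (if i then x₁ else x₀)) (x y : X) :
    get x y = get (put false x) (put true y) := by
  conv_lhs => rw [← get_put (get x y), put_get, put_get]
  simp

theorem get_self (get_put : ∀ z, get (put false z) (put true z) = z)
    (put_get : ∀ i x₀ x₁, put i (get x₀ x₁) = put i (if i then x₁ else x₀)) (x : X) :
    get x x = x := by
  rw [get_eq_get_put get_put put_get, get_put]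

theorem get_get (get_put : ∀ z, get (put false z) (put true z) = z)
    (put_get : ∀ i x₀ x₁, put i (get x₀ x₁) = put i (if i then x₁ else x₀)) (a b c d : X) :
    get (get a b) (get c d) = get a d := by
  rw [get_eq_get_put get_put put_get, put_get, put_get, get_eq_get_put get_put put_get a d]
  simp

end GetPut

theorem eq_getT_putT_zero (A : Type) (u : TL A 0) :
    u = getT A 0 (putT A 0 (u false).2 (fun s => ((u false).1, s)))
      (putT A 0 (u true).2 (fun s => ((u true).1, s))) := by
  funext s
  cases s <;> rfl

theorem eq_getT_closeT (A : Type) (n : ℕ) (u : TL A (n + 1)) :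
    u = getT A (n + 1) (closeT A n (u false)) (closeT A n (u true)) := by
  funext s
  cases s <;> rfl

section Lift

variable {A : Type} {Y : ℕ → Type} (putY : ∀ n, Bool → Y n → Y n)
  (getY : ∀ n, Y n → Y n → Y n) (closeY : ∀ n, Y n → Y (n + 1)) (f : A → Y 0)

def lift : ∀ n, TL A n → Y n
  | 0, u => getY 0 (putY 0 (u false).2 (f (u false).1)) (putY 0 (u true).2 (f (u true).1))
  | n + 1, u => getY (n + 1) (closeY n (lift n (u false))) (closeY n (lift n (u true)))

variable {putY getY closeY f}

theorem lift_pure (get_put : ∀ n (z : Y n), getY n (putY n false z) (putY n true z) = z)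
    (a : A) : lift putY getY closeY f 0 (fun s => (a, s)) = f a :=
  get_put 0 (f a)

section Laws

variable (get_put : ∀ n (z : Y n), getY n (putY n false z) (putY n true z) = z)
  (put_get : ∀ n (i : Bool) (x₀ x₁ : Y n),
    putY n i (getY n x₀ x₁) = putY n i (if i then x₁ else x₀))
include get_put put_get

theorem lift_closeT (n : ℕ) (u : TL A n) :
    lift putY getY closeY f (n + 1) (closeT A n u) = closeY n (lift putY getY closeY f n u) :=
  get_self (get_put (n + 1)) (put_get (n + 1)) _

theorem lift_getT (n : ℕ) (u v : TL A n) :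
    lift putY getY closeY f n (getT A n u v) =
      getY n (lift putY getY closeY f n u) (lift putY getY closeY f n v) := by
  cases n <;> exact (get_get (get_put _) (put_get _) _ _ _ _).symm

theorem lift_putT (put_put : ∀ n (i j : Bool) (z : Y n), putY n i (putY n j z) = putY n j z)
    (put_close : ∀ n (i : Bool) (z : Y n), putY (n + 1) i (closeY n z) = closeY n z)
    (n : ℕ) (i : Bool) (u : TL A n) :
    lift putY getY closeY f n (putT A n i u) = putY n i (lift putY getY closeY f n u) := by
  cases n with
  | zero =>
    calc lift putY getY closeY f 0 (putT A 0 i u)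
        = getY 0 (putY 0 (u i).2 (f (u i).1)) (putY 0 (u i).2 (f (u i).1)) := rfl
      _ = putY 0 (u i).2 (f (u i).1) := get_self (get_put 0) (put_get 0) _
      _ = putY 0 i (lift putY getY closeY f 0 u) := by
        rw [lift, put_get]
        cases i <;> simp [put_put]
  | succ n =>
    calc lift putY getY closeY f (n + 1) (putT A (n + 1) i u)
        = getY (n + 1) (closeY n (lift putY getY closeY f n (u i)))
            (closeY n (lift putY getY closeY f n (u i))) := rfl
      _ = closeY n (lift putY getY closeY f n (u i)) := get_self (get_put _) (put_get _) _
      _ = putY (n + 1) i (lift putY getY closeY f (n + 1) u) := by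
        rw [lift, put_get]
        cases i <;> simp [put_close]

end Laws

theorem lift_localT {localY : ∀ n, Bool → Y (n + 1) → Y n}
    (local_get : ∀ n (i : Bool) (x₀ x₁ : Y (n + 1)),
      localY n i (getY (n + 1) x₀ x₁) = localY n i (if i then x₁ else x₀))
    (local_close : ∀ n (i : Bool) (x : Y n), localY n i (closeY n x) = x)
    (n : ℕ) (i : Bool) (w : TL A (n + 1)) :
    lift putY getY closeY f n (localT A n i w) =
      localY n i (lift putY getY closeY f (n + 1) w) := by
  rw [lift.eq_2, local_get]
  cases i <;> exact (local_close _ _ _).symm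

theorem eq_lift_of_hom (g : ∀ n, TL A n → Y n) (hpure : ∀ a : A, g 0 (fun s => (a, s)) = f a)
    (hput : ∀ n (i : Bool) (u : TL A n), g n (putT A n i u) = putY n i (g n u))
    (hget : ∀ n (u v : TL A n), g n (getT A n u v) = getY n (g n u) (g n v))
    (hclose : ∀ n (u : TL A n), g (n + 1) (closeT A n u) = closeY n (g n u)) :
    g = lift putY getY closeY f := by
  funext n u
  induction n with
  | zero =>
    conv_lhs => rw [eq_getT_putT_zero A u]
    exact (hget _ _ _).trans <| congrArg₂ (getY 0)
      ((hput _ _ _).trans (congrArg _ (hpure _))) ((hput _ _ _).trans (congrArg _ (hpure _)))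
  | succ n ih =>
    conv_lhs => rw [eq_getT_closeT A n u]
    rw [hget, hclose, hclose, ih, ih, lift]

end Lift

theorem stmt_6_general (A : Type) (Y : ℕ → Type)
    (putY : ∀ n, Bool → Y n → Y n)
    (getY : ∀ n, Y n → Y n → Y n)
    (localY : ∀ n, Bool → Y (n + 1) → Y n)
    (closeY : ∀ n, Y n → Y (n + 1))
    (get_put : ∀ n (z : Y n),
      getY n (putY n false z) (putY n true z) = z)
    (put_put : ∀ n (i j : Bool) (z : Y n),
      putY n i (putY n j z) = putY n j z)
    (put_get : ∀ n (i : Bool) (x0 x1 : Y n),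
      putY n i (getY n x0 x1) = putY n i (if i then x1 else x0))
    (local_close : ∀ n (i : Bool) (x : Y n),
      localY n i (closeY n x) = x)
    (local_get : ∀ n (i : Bool) (x0 x1 : Y (n + 1)),
      localY n i (getY (n + 1) x0 x1) = localY n i (if i then x1 else x0))
    (put_close : ∀ n (i : Bool) (z : Y n),
      putY (n + 1) i (closeY n z) = closeY n z)
    (f : A → Y 0) :
    ∃! h : ∀ n, TL A n → Y n,
      (∀ a : A, h 0 (fun s => (a, s)) = f a) ∧
      (∀ n (i : Bool) (u : TL A n), h n (putT A n i u) = putY n i (h n u)) ∧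
      (∀ n (u v : TL A n), h n (getT A n u v) = getY n (h n u) (h n v)) ∧
      (∀ n (i : Bool) (w : TL A (n + 1)),
        h n (localT A n i w) = localY n i (h (n + 1) w)) ∧
      (∀ n (u : TL A n), h (n + 1) (closeT A n u) = closeY n (h n u)) := by
  refine ⟨lift putY getY closeY f,
    ⟨lift_pure get_put, lift_putT get_put put_get put_put put_close, lift_getT get_put put_get,
      lift_localT local_get local_close, lift_closeT get_put put_get⟩, ?_⟩
  rintro g ⟨hpure, hput, hget, -, hclose⟩
  exact eq_lift_of_hom g hpure hput hget hclose

/-- `TL` is the free model of the parameterized theory of single-bit mutable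
state with local values (equations (5)–(7)) on generators `A`. -/
theorem stmt_6 (A : Type) (Y : ℕ → Type)
    (putY : ∀ n, Bool → Y n → Y n)
    (getY : ∀ n, Y n → Y n → Y n)
    (localY : ∀ n, Bool → Y (n + 1) → Y n)
    (closeY : ∀ n, Y n → Y (n + 1))
    (get_put : ∀ n (z : Y n),
      getY n (putY n false z) (putY n true z) = z)
    (put_put : ∀ n (i j : Bool) (z : Y n),
      putY n i (putY n j z) = putY n j z)
    (put_get : ∀ n (i : Bool) (x0 x1 : Y n),
      putY n i (getY n x0 x1) = putY n i (if i then x1 else x0))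
    (local_close : ∀ n (i : Bool) (x : Y n),
      localY n i (closeY n x) = x)
    (local_get : ∀ n (i : Bool) (x0 x1 : Y (n + 1)),
      localY n i (getY (n + 1) x0 x1) = localY n i (if i then x1 else x0))
    (local_put : ∀ n (i j : Bool) (z : Y (n + 1)),
      localY n i (putY (n + 1) j z) = localY n j z)
    (put_close : ∀ n (i : Bool) (z : Y n),
      putY (n + 1) i (closeY n z) = closeY n z)
    (f : A → Y 0) :
    ∃! h : ∀ n, TL A n → Y n,
      (∀ a : A, h 0 (fun s => (a, s)) = f a) ∧
      (∀ n (i : Bool) (u : TL A n), h n (putT A n i u) = putY n i (h n u)) ∧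
      (∀ n (u v : TL A n), h n (getT A n u v) = getY n (h n u) (h n v)) ∧
      (∀ n (i : Bool) (w : TL A (n + 1)),
        h n (localT A n i w) = localY n i (h (n + 1) w)) ∧
      (∀ n (u : TL A n), h (n + 1) (closeT A n u) = closeY n (h n u)) :=
  stmt_6_general A Y putY getY localY closeY get_put put_put put_get local_close local_get put_close
    f

end Stmt6
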